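/- Suppose f : ℝ^{d₁}×⋯×ℝ^{d_M} → ℝ has the property that for each block j the partial gradient ∇_{w_j} f is L-Lipschitz in w_j with other blocks fixed. Then updating the blocks sequentially via w_j^{t+1} = w_j^t - η∇_{w_j} f(w_1^{t+1},…,w_{j-1}^{t+1},w_j^t,…,w_M^t) - ηβ(w_j^t - u_j^t) with η < 2/(β+L) yields L_β(w^{t+1},u^t) ≤ L_β(w^t,u^t), where L_β(w,u) = f(w) + λ‖u‖₀ + (β/2)‖w-u‖². -/

import Mathlib

open scoped Classical

/-- ℓ⁰ "norm" of a blockwise vector: total number of nonzero entries. -/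
noncomputable def norm0P {M : ℕ} {d : Fin M → ℕ}
    (u : PiLp 2 (fun j : Fin M => EuclideanSpace ℝ (Fin (d j)))) : ℝ :=
  ∑ j : Fin M,
    ((((Finset.univ : Finset (Fin (d j))).filter fun i => u j i ≠ 0).card : ℝ))

/-!
Each block update is a gradient step for `F p = f p + β/2 ‖p - u‖²` restricted to one block,
so `y - x` lives in a single block and `η ⟪∇F x, y - x⟫ = -‖y - x‖²`. Along the segment from
`x` to `y` only that block moves, so blockwise smoothness makes `∇f` `L`-Lipschitz there and the
descent lemma applies; the penalty is an exact quadratic. Together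
`F y ≤ F x + (-1/η + (β + L)/2) ‖y - x‖² ≤ F x` because `η (β + L) < 2`, and the blockwise
decreases telescope over one sweep.
-/

open Set

section Descent

variable {E : Type*} [NormedAddCommGroup E] [InnerProductSpace ℝ E] [CompleteSpace E]
  {f : E → ℝ} {L : ℝ} {x y : E}

theorem hasDerivAt_comp_add_smul_sub (hf : Differentiable ℝ f) (t : ℝ) :
    HasDerivAt (fun s : ℝ => f (x + s • (y - x)))
      (inner ℝ (gradient f (x + t • (y - x))) (y - x)) t := by
  have hline : HasDerivAt (fun s : ℝ => x + s • (y - x)) (y - x) t := by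
    simpa using ((hasDerivAt_id t).smul_const (y - x)).const_add x
  simpa [InnerProductSpace.toDual_apply_apply, Function.comp_def] using
    (hf _).hasGradientAt.hasFDerivAt.comp_hasDerivAt t hline

theorem le_add_inner_gradient_add_sq_of_segment (hf : Differentiable ℝ f)
    (hlip : ∀ p ∈ segment ℝ x y, ‖gradient f p - gradient f x‖ ≤ L * ‖p - x‖) :
    f y ≤ f x + inner ℝ (gradient f x) (y - x) + L / 2 * ‖y - x‖ ^ 2 := by
  have hφ (t : ℝ) :
      HasDerivAt (fun s : ℝ => f (x + s • (y - x)) - s * inner ℝ (gradient f x) (y - x))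
        (inner ℝ (gradient f (x + t • (y - x))) (y - x) - inner ℝ (gradient f x) (y - x)) t :=
    (hasDerivAt_comp_add_smul_sub hf t).sub (hasDerivAt_mul_const _)
  have hB (t : ℝ) : HasDerivAt (fun s : ℝ => f x + L / 2 * ‖y - x‖ ^ 2 * s ^ 2)
      (L / 2 * ‖y - x‖ ^ 2 * (2 * t)) t := by
    simpa using ((hasDerivAt_pow 2 t).const_mul (L / 2 * ‖y - x‖ ^ 2)).const_add (f x)
  have hslope : ∀ t ∈ Ico (0 : ℝ) 1, inner ℝ (gradient f (x + t • (y - x))) (y - x)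
      - inner ℝ (gradient f x) (y - x) ≤ L / 2 * ‖y - x‖ ^ 2 * (2 * t) := by
    rintro t ⟨ht0, ht1⟩
    have hmem : x + t • (y - x) ∈ segment ℝ x y :=
      segment_eq_image' ℝ x y ▸ mem_image_of_mem _ ⟨ht0, ht1.le⟩
    have hlipt := hlip _ hmem
    rw [add_sub_cancel_left, norm_smul, Real.norm_of_nonneg ht0] at hlipt
    calc inner ℝ (gradient f (x + t • (y - x))) (y - x) - inner ℝ (gradient f x) (y - x)
        = inner ℝ (gradient f (x + t • (y - x)) - gradient f x) (y - x) := (inner_sub_left ..).symm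
      _ ≤ ‖gradient f (x + t • (y - x)) - gradient f x‖ * ‖y - x‖ := real_inner_le_norm _ _
      _ ≤ L * (t * ‖y - x‖) * ‖y - x‖ := by gcongr
      _ = L / 2 * ‖y - x‖ ^ 2 * (2 * t) := by ring
  have hend := image_le_of_deriv_right_le_deriv_boundary
    (fun t _ => (hφ t).continuousAt.continuousWithinAt) (fun t _ => (hφ t).hasDerivWithinAt)
    (by simp) (fun t _ => (hB t).continuousAt.continuousWithinAt)
    (fun t _ => (hB t).hasDerivWithinAt) hslope (right_mem_Icc.2 zero_le_one)
  simp only [one_smul, add_sub_cancel, one_mul, one_pow, mul_one] at hend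
  linarith

theorem penalized_le_of_gradient_step {β η : ℝ} (u : E) (hf : Differentiable ℝ f)
    (hlip : ∀ p ∈ segment ℝ x y, ‖gradient f p - gradient f x‖ ≤ L * ‖p - x‖)
    (hη : 0 < η) (hηL : η * (β + L) ≤ 2)
    (hstep : η * inner ℝ (gradient f x + β • (x - u)) (y - x) = -‖y - x‖ ^ 2) :
    f y + β / 2 * ‖y - u‖ ^ 2 ≤ f x + β / 2 * ‖x - u‖ ^ 2 := by
  have hdesc := le_add_inner_gradient_add_sq_of_segment hf hlip
  have hquad : ‖y - u‖ ^ 2 = ‖x - u‖ ^ 2 + 2 * inner ℝ (x - u) (y - x) + ‖y - x‖ ^ 2 := by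
    rw [← norm_add_sq_real, sub_add_sub_cancel']
  rw [inner_add_left, real_inner_smul_left] at hstep
  have hdecrease : η * (inner ℝ (gradient f x) (y - x) + β * inner ℝ (x - u) (y - x)
      + (β + L) / 2 * ‖y - x‖ ^ 2) ≤ 0 := by
    nlinarith [mul_nonneg (sub_nonneg.2 hηL) (sq_nonneg ‖y - x‖)]
  have hfirst_order := nonpos_of_mul_nonpos_right hdecrease hη
  rw [hquad]
  linarith

end Descent

section Blocks

variable {ι : Type*} {E : ι → Type*} [∀ i, NormedAddCommGroup (E i)]
  [∀ i, InnerProductSpace ℝ (E i)]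

theorem apply_eq_of_mem_segment_of_forall_ne {x y p : PiLp 2 E} {j : ι}
    (hxy : ∀ i ≠ j, y i = x i) (hp : p ∈ segment ℝ x y) : ∀ i ≠ j, p i = x i := by
  obtain ⟨a, b, -, -, hab, rfl⟩ := hp
  intro i hi
  rw [PiLp.add_apply, PiLp.smul_apply, PiLp.smul_apply, hxy i hi, ← add_smul, hab, one_smul]

variable [Fintype ι]

theorem PiLp.inner_eq_inner_apply_of_forall_ne {a x : PiLp 2 E} {j : ι}
    (hx : ∀ i ≠ j, x i = 0) : inner ℝ a x = inner ℝ (a j) (x j) := by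
  rw [PiLp.inner_apply, Finset.sum_eq_single_of_mem j (Finset.mem_univ j)]
  intro i _ hij
  rw [hx i hij, inner_zero_right]

theorem PiLp.norm_eq_norm_apply_of_forall_ne {x : PiLp 2 E} {j : ι}
    (hx : ∀ i ≠ j, x i = 0) : ‖x‖ = ‖x j‖ := by
  rw [norm_eq_sqrt_re_inner (𝕜 := ℝ), PiLp.inner_eq_inner_apply_of_forall_ne hx,
    ← norm_eq_sqrt_re_inner]

theorem mul_inner_eq_neg_norm_sq_of_block_update {x y g : PiLp 2 E} {j : ι} {η : ℝ}
    (hfix : ∀ i ≠ j, y i = x i) (hj : y j = x j - η • g j) :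
    η * inner ℝ g (y - x) = -‖y - x‖ ^ 2 := by
  have hsupp : ∀ i ≠ j, (y - x) i = 0 := fun i hi => by
    rw [PiLp.sub_apply, hfix i hi, sub_self]
  have hdiff : (y - x) j = -η • g j := by
    rw [PiLp.sub_apply, hj, neg_smul, sub_sub_cancel_left]
  rw [PiLp.inner_eq_inner_apply_of_forall_ne hsupp, PiLp.norm_eq_norm_apply_of_forall_ne hsupp,
    hdiff, real_inner_smul_right, norm_smul, mul_pow, Real.norm_eq_abs, sq_abs,
    real_inner_self_eq_norm_sq]
  ring

variable [∀ i, CompleteSpace (E i)]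

theorem penalized_le_of_block_gradient_step {f : PiLp 2 E → ℝ} {L β η : ℝ} (u : PiLp 2 E)
    (hf : Differentiable ℝ f)
    (hLip : ∀ x y : PiLp 2 E, ∀ j : ι, (∀ i : ι, i ≠ j → x i = y i) →
      ‖gradient f y - gradient f x‖ ≤ L * ‖y j - x j‖)
    (hη : 0 < η) (hηL : η * (β + L) ≤ 2) {x y : PiLp 2 E} {j : ι}
    (hfix : ∀ i ≠ j, y i = x i) (hj : y j = x j - η • (gradient f x + β • (x - u)) j) :
    f y + β / 2 * ‖y - u‖ ^ 2 ≤ f x + β / 2 * ‖x - u‖ ^ 2 := by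
  refine penalized_le_of_gradient_step u hf (fun p hp => ?_) hη hηL
    (mul_inner_eq_neg_norm_sq_of_block_update hfix hj)
  have hpx := apply_eq_of_mem_segment_of_forall_ne hfix hp
  have hsupp : ∀ i ≠ j, (p - x) i = 0 := fun i hi => by
    rw [PiLp.sub_apply, hpx i hi, sub_self]
  rw [PiLp.norm_eq_norm_apply_of_forall_ne hsupp, PiLp.sub_apply]
  exact hLip x p j fun i hi => (hpx i hi).symm

end Blocks

theorem blockwise_rvsm_descent_general {M : ℕ} {d : Fin M → ℕ}
    (f : PiLp 2 (fun j : Fin M => EuclideanSpace ℝ (Fin (d j))) → ℝ)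
    (L β lam η : ℝ)
    (hη : 0 < η) (hη2 : η < 2 / (β + L))
    (hdiff : Differentiable ℝ f)
    (hLip : ∀ x y : PiLp 2 (fun j : Fin M => EuclideanSpace ℝ (Fin (d j))),
      ∀ j : Fin M, (∀ i : Fin M, i ≠ j → x i = y i) →
        ‖gradient f y - gradient f x‖ ≤ L * ‖y j - x j‖)
    (w u : PiLp 2 (fun j : Fin M => EuclideanSpace ℝ (Fin (d j))))
    (z : ℕ → PiLp 2 (fun j : Fin M => EuclideanSpace ℝ (Fin (d j))))
    (hz0 : z 0 = w)
    (hzstep : ∀ j : Fin M,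
      (z ((j : ℕ) + 1)) j
        = z (j : ℕ) j - η • (gradient f (z (j : ℕ))) j
            - (η * β) • (z (j : ℕ) j - u j))
    (hzfix : ∀ j : Fin M, ∀ i : Fin M, i ≠ j → z ((j : ℕ) + 1) i = z (j : ℕ) i)
    (wnew : PiLp 2 (fun j : Fin M => EuclideanSpace ℝ (Fin (d j))))
    (hwnew : wnew = z M) :
    f wnew + lam * norm0P u + β / 2 * ‖wnew - u‖ ^ 2
      ≤ f w + lam * norm0P u + β / 2 * ‖w - u‖ ^ 2 := by
  have hβL : 0 < β + L := by
    by_contra! h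
    linarith [div_nonpos_of_nonneg_of_nonpos zero_le_two h]
  have hηL : η * (β + L) ≤ 2 := ((lt_div_iff₀ hβL).1 hη2).le
  set F := fun k : Fin (M + 1) => f (z k) + β / 2 * ‖z k - u‖ ^ 2
  have hanti : Antitone F := Fin.antitone_iff_succ_le.2 fun j =>
    penalized_le_of_block_gradient_step u hdiff hLip hη hηL (hzfix j) (by
      rw [Fin.val_succ, Fin.val_castSucc, hzstep j]
      simp only [PiLp.add_apply, PiLp.smul_apply, PiLp.sub_apply]
      module)
  have hsweep := hanti (Fin.zero_le (Fin.last M))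
  simp only [F, Fin.val_last, Fin.val_zero, hz0] at hsweep
  rw [hwnew]
  linarith

theorem blockwise_rvsm_descent {M : ℕ} {d : Fin M → ℕ}
    (f : PiLp 2 (fun j : Fin M => EuclideanSpace ℝ (Fin (d j))) → ℝ)
    (L β lam η : ℝ)
    (hβ : 0 < β) (hlam : 0 < lam) (hL : 0 ≤ L) (hη : 0 < η) (hη2 : η < 2 / (β + L))
    (hdiff : Differentiable ℝ f)
    (hLip : ∀ x y : PiLp 2 (fun j : Fin M => EuclideanSpace ℝ (Fin (d j))),
      ∀ j : Fin M, (∀ i : Fin M, i ≠ j → x i = y i) →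
        ‖gradient f y - gradient f x‖ ≤ L * ‖y j - x j‖)
    (w u : PiLp 2 (fun j : Fin M => EuclideanSpace ℝ (Fin (d j))))
    (z : ℕ → PiLp 2 (fun j : Fin M => EuclideanSpace ℝ (Fin (d j))))
    (hz0 : z 0 = w)
    (hzstep : ∀ j : Fin M,
      (z ((j : ℕ) + 1)) j
        = z (j : ℕ) j - η • (gradient f (z (j : ℕ))) j
            - (η * β) • (z (j : ℕ) j - u j))
    (hzfix : ∀ j : Fin M, ∀ i : Fin M, i ≠ j → z ((j : ℕ) + 1) i = z (j : ℕ) i)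
    (wnew : PiLp 2 (fun j : Fin M => EuclideanSpace ℝ (Fin (d j))))
    (hwnew : wnew = z M) :
    f wnew + lam * norm0P u + β / 2 * ‖wnew - u‖ ^ 2
      ≤ f w + lam * norm0P u + β / 2 * ‖w - u‖ ^ 2 :=
  blockwise_rvsm_descent_general f L β lam η hη hη2 hdiff hLip w u z hz0 hzstep hzfix wnew hwnew
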